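/- Let d ≡ 5 (mod 8) be a positive squarefree integer, K = ℚ(√d), O = ℤ[√d] the order of conductor 2, and ε_d the fundamental unit of O_K. Then ε_d ≡ 1 (mod 2O_K) if and only if the unit groups O* and O_K* coincide. -/

import Mathlib

open NumberField Polynomial

/-- A rational whose square is an integer is an integer. -/
lemma aux_rat_of_sq_int (r : ℚ) (m : ℤ) (h : r ^ 2 = (m : ℚ)) : ∃ z : ℤ, (z : ℚ) = r := by
  have hint : IsIntegral ℤ r := by
    refine ⟨X ^ 2 - C m, monic_X_pow_sub_C _ two_ne_zero, ?_⟩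
    simp only [eval₂_sub, eval₂_pow, eval₂_X, eval₂_C, h]
    simp
  exact IsIntegrallyClosed.isIntegral_iff.mp hint

/-- d squarefree and not 1 is not the square of a rational. -/
lemma aux_not_rat_sq (d : ℕ) (hd : Squarefree d) (hd1 : d ≠ 1) (q : ℚ) : q ^ 2 ≠ (d : ℚ) := by
  intro hq
  obtain ⟨m, hm⟩ := aux_rat_of_sq_int q d (by exact_mod_cast hq)
  have hmz : m ^ 2 = (d : ℤ) := by
    have : (m : ℚ) ^ 2 = (d : ℚ) := by rw [hm]; exact hq
    exact_mod_cast this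
  have hnat : m.natAbs * m.natAbs = d := by
    have := congrArg Int.natAbs hmz
    rw [sq, Int.natAbs_mul, Int.natAbs_natCast] at this
    exact this
  have : IsUnit m.natAbs := hd _ (dvd_of_eq hnat)
  rw [Nat.isUnit_iff] at this
  rw [this] at hnat
  omega

lemma aux_not_range (d : ℕ) (hd : Squarefree d) (hd1 : d ≠ 1)
    {K : Type*} [Field K] [Algebra ℚ K] (b : K) (hb : b ^ 2 = (d : K)) (r : ℚ) :
    algebraMap ℚ K r ≠ b := by
  intro h
  apply aux_not_rat_sq d hd hd1 r
  have : algebraMap ℚ K (r ^ 2) = algebraMap ℚ K (d : ℚ) := by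
    rw [map_pow, h, hb, map_natCast]
  exact (algebraMap ℚ K).injective this

lemma aux_li (d : ℕ) (hd : Squarefree d) (hd1 : d ≠ 1)
    {K : Type*} [Field K] [Algebra ℚ K] (b : K) (hb : b ^ 2 = (d : K)) :
    LinearIndependent ℚ ![1, b] := by
  rw [LinearIndependent.pair_iff]
  intro s t hst
  rw [Algebra.smul_def, Algebra.smul_def, mul_one] at hst
  by_cases ht : t = 0
  · subst ht
    simp only [map_zero, zero_mul, add_zero] at hst
    refine ⟨(algebraMap ℚ K).injective (by rw [hst, map_zero]), rfl⟩
  · exfalso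
    apply aux_not_range d hd hd1 b hb (-s / t)
    have htK : algebraMap ℚ K t ≠ 0 := (map_ne_zero (algebraMap ℚ K)).mpr ht
    rw [map_div₀, map_neg, div_eq_iff htK]
    linear_combination -hst

lemma aux_repr (d : ℕ) (hd : Squarefree d) (hd1 : d ≠ 1)
    {K : Type*} [Field K] [Algebra ℚ K] (hK : Module.finrank ℚ K = 2)
    (b : K) (hb : b ^ 2 = (d : K)) (x : K) :
    ∃ p q : ℚ, x = algebraMap ℚ K p + algebraMap ℚ K q * b := by
  have li := aux_li d hd hd1 b hb
  have hsp := li.span_eq_top_of_card_eq_finrank (by simpa using hK.symm)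
  have hx : x ∈ Submodule.span ℚ (Set.range ![1, b]) := by rw [hsp]; trivial
  rw [Submodule.mem_span_range_iff_exists_fun] at hx
  obtain ⟨c, hc⟩ := hx
  refine ⟨c 0, c 1, ?_⟩
  rw [← hc, Fin.sum_univ_two]
  simp [Algebra.smul_def]

lemma aux_two_mul (d : ℕ) (hd : Squarefree d) (hd1 : d ≠ 1)
    {K : Type*} [Field K] [NumberField K] (hK : Module.finrank ℚ K = 2)
    (b : K) (hb : b ^ 2 = (d : K)) (x : K) (hx : IsIntegral ℤ x) :
    ∃ a c : ℤ, 2 * x = (a : K) + (c : K) * b := by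
  obtain ⟨p, q, e⟩ := aux_repr d hd hd1 hK b hb x
  by_cases hq : q = 0
  · subst hq
    simp only [map_zero, zero_mul, add_zero] at e
    subst e
    rw [isIntegral_algebraMap_iff (algebraMap ℚ K).injective] at hx
    obtain ⟨z, hz⟩ := IsIntegrallyClosed.isIntegral_iff.mp hx
    refine ⟨2 * z, 0, ?_⟩
    push_cast
    rw [← hz]
    simp [Algebra.smul_def]
  · -- x not in the range of ℚ
    have hxr : x ∉ (algebraMap ℚ K).range := by
      rintro ⟨r, hr⟩
      apply aux_not_range d hd hd1 b hb ((r - p) / q)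
      have hqK : algebraMap ℚ K q ≠ 0 := (_root_.map_ne_zero _).mpr hq
      rw [map_div₀, map_sub, div_eq_iff hqK]
      rw [← hr] at e
      linear_combination e
    have hxQ : IsIntegral ℚ x := IsIntegral.of_finite ℚ x
    set f : ℚ[X] := X ^ 2 - C (2 * p) * X + C (p ^ 2 - d * q ^ 2) with hf
    have hb' : b ^ 2 = algebraMap ℚ K ((d : ℚ)) := by rw [map_natCast]; exact hb
    have hf0 : aeval x f = 0 := by
      simp only [hf, map_add, map_sub, map_mul, map_pow, aeval_X, aeval_C]
      rw [e]
      simp only [map_mul, map_sub, map_pow, map_ofNat, map_natCast]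
      linear_combination (algebraMap ℚ K q) ^ 2 * hb
    have hfm : f.Monic := by
      have h2 : f = X ^ 2 + (C (p ^ 2 - d * q ^ 2) - C (2 * p) * X) := by ring
      rw [h2]
      apply monic_X_pow_add
      apply lt_of_le_of_lt (degree_sub_le _ _)
      have h3 : (C (2 * p) * X).degree ≤ 1 := degree_C_mul_X_le _
      have h4 : (C (p ^ 2 - (d : ℚ) * q ^ 2)).degree ≤ 0 := degree_C_le
      calc max (C (p ^ 2 - (d:ℚ) * q ^ 2)).degree ((C (2 * p) * X)).degree ≤ 1 :=
            max_le (le_trans h4 (by norm_num)) h3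
        _ < 2 := by norm_num
    have hdvd : minpoly ℚ x ∣ f := minpoly.dvd ℚ x hf0
    have hdeg2 : (minpoly ℚ x).natDegree = 2 := by
      have hge : 2 ≤ (minpoly ℚ x).natDegree := (minpoly.two_le_natDegree_iff hxQ).mpr hxr
      have hle : (minpoly ℚ x).natDegree ≤ f.natDegree :=
        natDegree_le_of_dvd hdvd hfm.ne_zero
      have hfd : f.natDegree = 2 := by
        rw [hf]; compute_degree!
      omega
    have hmeq : minpoly ℚ x = f := by
      obtain ⟨g, hg⟩ := hdvd
      have hfd : f.natDegree = 2 := by rw [hf]; compute_degree!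
      have hmm : (minpoly ℚ x).Monic := minpoly.monic hxQ
      have hg0 : g ≠ 0 := by
        rintro rfl; rw [mul_zero] at hg; exact hfm.ne_zero hg
      have : g.natDegree = 0 := by
        have := natDegree_mul (hmm.ne_zero) hg0
        rw [← hg] at this
        omega
      have hgC : g = C (g.coeff 0) := eq_C_of_natDegree_eq_zero this
      have hlc : g.coeff 0 = 1 := by
        have := congrArg leadingCoeff hg
        rw [hfm.leadingCoeff, leadingCoeff_mul, hmm.leadingCoeff, one_mul, hgC] at this
        simpa using this.symm
      rw [hg, hgC, hlc, map_one, mul_one]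
    -- integer coefficients
    have hmap : minpoly ℚ x = (minpoly ℤ x).map (algebraMap ℤ ℚ) :=
      minpoly.isIntegrallyClosed_eq_field_fractions ℚ K hx
    have hc1 : ((minpoly ℤ x).coeff 1 : ℚ) = -(2 * p) := by
      have := congrArg (fun h => h.coeff 1) hmap
      simp only [hmeq, hf, coeff_map, eq_intCast] at this
      rw [← this]
      simp only [coeff_add, coeff_sub, coeff_X_pow, coeff_C_mul, coeff_X_one, coeff_X_zero, coeff_C]
      norm_num
    have hc0 : ((minpoly ℤ x).coeff 0 : ℚ) = p ^ 2 - d * q ^ 2 := by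
      have := congrArg (fun h => h.coeff 0) hmap
      simp only [hmeq, hf, coeff_map, eq_intCast] at this
      rw [← this]
      simp only [coeff_add, coeff_sub, coeff_X_pow, coeff_C_mul, coeff_X_one, coeff_X_zero, coeff_C]
      norm_num
    set t : ℤ := (minpoly ℤ x).coeff 1
    set n : ℤ := (minpoly ℤ x).coeff 0
    -- 2p = -t
    have h2p : 2 * p = ((-t : ℤ) : ℚ) := by push_cast; linarith [hc1]
    -- d*(2q)^2 = t^2 - 4n
    have hdr : (d : ℚ) * (2 * q) ^ 2 = ((t ^ 2 - 4 * n : ℤ) : ℚ) := by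
      push_cast
      linear_combination (-((t : ℚ)) + 2 * p) * hc1 + 4 * hc0
    -- s = d * 2q is an integer
    have hs : ((d : ℚ) * (2 * q)) ^ 2 = (((d : ℤ) * (t ^ 2 - 4 * n) : ℤ) : ℚ) := by
      push_cast at hdr ⊢
      linear_combination (d : ℚ) * hdr
    obtain ⟨m, hm⟩ := aux_rat_of_sq_int _ _ hs
    have hm2 : m ^ 2 = (d : ℤ) * (t ^ 2 - 4 * n) := by
      have : ((m : ℚ)) ^ 2 = (((d : ℤ) * (t ^ 2 - 4 * n) : ℤ) : ℚ) := by rw [hm]; exact hs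
      exact_mod_cast this
    have hddvd : (d : ℤ) ∣ m := by
      have hsf : Squarefree (d : ℤ) := Int.squarefree_natCast.mpr hd
      exact (hsf.dvd_pow_iff_dvd two_ne_zero).mp ⟨t ^ 2 - 4 * n, hm2⟩
    obtain ⟨c, hc⟩ := hddvd
    have hd0 : (d : ℚ) ≠ 0 := Nat.cast_ne_zero.mpr hd.ne_zero
    have h2q : 2 * q = ((c : ℤ) : ℚ) := by
      rw [hc] at hm
      push_cast at hm
      exact (mul_left_cancel₀ hd0 hm).symm
    refine ⟨-t, c, ?_⟩
    have key : 2 * x = algebraMap ℚ K (2 * p) + algebraMap ℚ K (2 * q) * b := by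
      rw [e]
      simp only [map_mul, map_ofNat]
      ring
    rw [key, h2p, h2q, map_intCast, map_intCast]

lemma aux_adjoin_mem {R : Type*} [CommRing R] (β : R) (d : ℤ) (hβ : β ^ 2 = (d : R))
    (x : R) (hx : x ∈ Algebra.adjoin ℤ ({β} : Set R)) :
    ∃ a c : ℤ, x = (a : R) + (c : R) * β := by
  rw [Algebra.adjoin_singleton_eq_range_aeval] at hx
  obtain ⟨f, hf⟩ := hx
  set g : ℤ[X] := X ^ 2 - C d with hg
  have hgm : g.Monic := monic_X_pow_sub_C _ two_ne_zero
  have hg1 : g ≠ 1 := by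
    intro h
    have := congrArg natDegree h
    rw [hg, natDegree_X_pow_sub_C, natDegree_one] at this
    omega
  have hmod : aeval β f = aeval β (f %ₘ g) := by
    conv_lhs => rw [← modByMonic_add_div f g]
    rw [map_add, map_mul]
    have : aeval β g = 0 := by
      rw [hg, map_sub, map_pow, aeval_X, aeval_C, hβ]
      simp
    rw [this, zero_mul, add_zero]
  have hdeg : (f %ₘ g).natDegree ≤ 1 := by
    have h1 := natDegree_modByMonic_lt f hgm hg1
    have h2 : g.natDegree = 2 := natDegree_X_pow_sub_C
    omega
  refine ⟨(f %ₘ g).coeff 0, (f %ₘ g).coeff 1, ?_⟩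
  have hf' : aeval β f = x := hf
  rw [← hf', hmod]
  conv_lhs => rw [eq_X_add_C_of_natDegree_le_one hdeg]
  rw [map_add, map_mul, aeval_X, aeval_C, aeval_C]
  simp only [eq_intCast]
  ring

/-- For `d ≡ 5 (mod 8)` positive squarefree, `K = ℚ(√d)`, `O = ℤ[√d]` the order of
conductor 2 and `ε` the fundamental unit of `𝓞 K`: `ε ≡ 1 (mod 2𝓞 K)` iff the unit
groups of `O` and `𝓞 K` coincide (i.e. every unit of `𝓞 K` lies in `O`). -/
theorem eisenstein_iff_units_coincide (d : ℕ) (hd : Squarefree d) (h5 : d % 8 = 5)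
    (K : Type*) [Field K] [NumberField K]
    (hK : Module.finrank ℚ K = 2)
    (β : 𝓞 K) (hβ : β ^ 2 = (d : 𝓞 K))
    (ε : (𝓞 K)ˣ)
    (hfund : ∀ u : (𝓞 K)ˣ, ∃ n : ℤ, u = ε ^ n ∨ u = -ε ^ n) :
    ((ε : 𝓞 K) - 1 ∈ Ideal.span {(2 : 𝓞 K)}) ↔
      (∀ u : (𝓞 K)ˣ, (u : 𝓞 K) ∈ Algebra.adjoin ℤ ({β} : Set (𝓞 K))) := by
  have hd1 : d ≠ 1 := by omega
  have hbK : (algebraMap (𝓞 K) K β) ^ 2 = (d : K) := by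
    rw [← map_pow, hβ, map_natCast]
  have hinj : Function.Injective (algebraMap (𝓞 K) K) :=
    NumberField.RingOfIntegers.coe_injective
  set A := Algebra.adjoin ℤ ({β} : Set (𝓞 K)) with hA
  have hβA : β ∈ A := Algebra.subset_adjoin rfl
  have hmemA : ∀ a c : ℤ, ((a : 𝓞 K) + (c : 𝓞 K) * β) ∈ A := fun a c =>
    add_mem (Subalgebra.intCast_mem A a) (mul_mem (Subalgebra.intCast_mem A c) hβA)
  have hstep : ∀ v : 𝓞 K, v - 1 ∈ Ideal.span {(2 : 𝓞 K)} → v ∈ A := by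
    intro v hv
    rw [Ideal.mem_span_singleton] at hv
    obtain ⟨y, hy⟩ := hv
    obtain ⟨a, c, hac⟩ := aux_two_mul d hd hd1 hK _ hbK _ y.isIntegral_coe
    have hv' : v = ((1 + a : ℤ) : 𝓞 K) + (c : 𝓞 K) * β := by
      apply hinj
      have hyK := congrArg (algebraMap (𝓞 K) K) hy
      simp only [map_sub, map_mul, map_one, map_ofNat] at hyK
      simp only [map_add, map_mul, map_intCast]
      push_cast
      linear_combination hyK + hac
    rw [hv']
    exact hmemA _ _
  constructor
  · intro hε u
    have hεA : ((ε : (𝓞 K)ˣ) : 𝓞 K) ∈ A := hstep _ hε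
    have hinv1 : ((ε⁻¹ : (𝓞 K)ˣ) : 𝓞 K) - 1 ∈ Ideal.span {(2 : 𝓞 K)} := by
      have hmul : ((ε⁻¹ : (𝓞 K)ˣ) : 𝓞 K) * (ε : 𝓞 K) = 1 := ε.inv_mul
      have heq : ((ε⁻¹ : (𝓞 K)ˣ) : 𝓞 K) - 1 = ((ε⁻¹ : (𝓞 K)ˣ) : 𝓞 K) * (1 - (ε : 𝓞 K)) := by
        rw [mul_sub, mul_one, hmul]
      rw [heq]
      refine Ideal.mul_mem_left _ _ ?_
      have hneg := neg_mem hε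
      rwa [neg_sub] at hneg
    have hεinvA := hstep _ hinv1
    have hpow : ∀ n : ℤ, ((ε ^ n : (𝓞 K)ˣ) : 𝓞 K) ∈ A := by
      intro n
      obtain ⟨m, rfl | rfl⟩ := n.eq_nat_or_neg
      · rw [zpow_natCast, Units.val_pow_eq_pow_val]
        exact pow_mem hεA m
      · rw [zpow_neg, zpow_natCast, ← inv_pow, Units.val_pow_eq_pow_val]
        exact pow_mem hεinvA m
    obtain ⟨n, hn | hn⟩ := hfund u
    · rw [hn]; exact hpow n
    · rw [hn, Units.val_neg]
      exact neg_mem (hpow n)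
  · intro h
    have hd8 : d = 8 * (d / 8) + 5 := by omega
    set k := d / 8 with hk
    have hbK2 : (algebraMap (𝓞 K) K β) ^ 2 = 8 * (k : K) + 5 := by
      rw [hbK, hd8]
      push_cast
      ring
    have hy0 : IsIntegral ℤ (((algebraMap (𝓞 K) K β) - 1) / 2) := by
      refine ⟨X ^ 2 + X - C (2 * (k : ℤ) + 1), ?_, ?_⟩
      · have : (X ^ 2 + X - C (2 * (k : ℤ) + 1) : ℤ[X])
            = X ^ 2 + (X - C (2 * (k : ℤ) + 1)) := by ring
        rw [this]
        apply monic_X_pow_add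
        rw [degree_X_sub_C]
        norm_num
      · simp only [eval₂_sub, eval₂_add, eval₂_mul, eval₂_one, eval₂_ofNat, eval₂_pow,
          eval₂_X, eval₂_C, map_add, map_mul, map_one, map_ofNat, map_intCast]
        push_cast
        linear_combination hbK2 / 4
    have hβ1 : β - 1 ∈ Ideal.span {(2 : 𝓞 K)} := by
      rw [Ideal.mem_span_singleton]
      refine ⟨⟨_, (mem_integralClosure_iff ℤ K).mpr hy0⟩, ?_⟩
      apply hinj
      show _ = (2 : K) * (((algebraMap (𝓞 K) K β) - 1) / 2)
      simp only [map_sub, map_mul, map_one, map_ofNat, NumberField.RingOfIntegers.map_mk]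
      ring
    obtain ⟨a, c, hac⟩ := aux_adjoin_mem β (d : ℤ) (by exact_mod_cast hβ) _ (h ε)
    obtain ⟨a', c', hac'⟩ := aux_adjoin_mem β (d : ℤ) (by exact_mod_cast hβ) _ (h ε⁻¹)
    have hprod : ((a : 𝓞 K) + (c : 𝓞 K) * β) * ((a' : 𝓞 K) + (c' : 𝓞 K) * β) = 1 := by
      rw [← hac, ← hac']
      exact ε.mul_inv
    have hKeq : ((a * a' + (d : ℤ) * (c * c') - 1 : ℤ) : K)
        + ((a * c' + a' * c : ℤ) : K) * algebraMap (𝓞 K) K β = 0 := by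
      have hP := congrArg (algebraMap (𝓞 K) K) hprod
      simp only [map_add, map_mul, map_one, map_intCast] at hP
      push_cast
      linear_combination hP - (c : K) * (c' : K) * hbK
    have li := aux_li d hd hd1 (algebraMap (𝓞 K) K β) hbK
    have hpair := (LinearIndependent.pair_iff.mp li)
      ((a * a' + (d : ℤ) * (c * c') - 1 : ℤ) : ℚ) ((a * c' + a' * c : ℤ) : ℚ) (by
        rw [Algebra.smul_def, Algebra.smul_def, mul_one, map_intCast, map_intCast]
        exact hKeq)
    have e1 : a * a' + (d : ℤ) * (c * c') = 1 := by
      have h0 : (a * a' + (d : ℤ) * (c * c') - 1 : ℤ) = 0 := by exact_mod_cast hpair.1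
      linarith
    have e2 : a * c' + a' * c = 0 := by exact_mod_cast hpair.2
    have hdec : ∀ A B C D : ZMod 2, A * B + C * D = 1 → A * D + B * C = 0 → A + C = 1 := by
      decide
    have hd2 : ((d : ℕ) : ZMod 2) = 1 := by
      rw [← ZMod.natCast_mod, show d % 2 = 1 by omega]
      norm_num
    have hz1 : (a : ZMod 2) * (a' : ZMod 2) + (c : ZMod 2) * (c' : ZMod 2) = 1 := by
      have hcast := congrArg (fun z : ℤ => (z : ZMod 2)) e1
      push_cast at hcast
      rw [hd2] at hcast
      linear_combination hcast
    have hz2 : (a : ZMod 2) * (c' : ZMod 2) + (a' : ZMod 2) * (c : ZMod 2) = 0 := by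
      have hcast := congrArg (fun z : ℤ => (z : ZMod 2)) e2
      push_cast at hcast
      linear_combination hcast
    have hsum : (a : ZMod 2) + (c : ZMod 2) = 1 := hdec _ _ _ _ hz1 hz2
    have hz3 : ((a + c - 1 : ℤ) : ZMod 2) = 0 := by
      push_cast
      linear_combination hsum
    obtain ⟨w, hw⟩ := (ZMod.intCast_zmod_eq_zero_iff_dvd _ 2).mp hz3
    have hfinal : ((ε : (𝓞 K)ˣ) : 𝓞 K) - 1
        = ((a + c - 1 : ℤ) : 𝓞 K) + (c : 𝓞 K) * (β - 1) := by
      rw [hac]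
      push_cast
      ring
    rw [hfinal]
    refine Ideal.add_mem _ ?_ (Ideal.mul_mem_left _ _ hβ1)
    rw [Ideal.mem_span_singleton]
    exact ⟨(w : 𝓞 K), by exact_mod_cast congrArg (fun z : ℤ => (z : 𝓞 K)) hw⟩
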